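/- arXiv:2510.14029 — 3 statements merged into one kernel-verified Lean document; each statement's English description precedes it below -/
import Mathlib

section
/- Every element of the ternary group ((ZMod 3) × (ZMod 3), μ) is a polyadic idempotent of polyadic power 3: for every g ∈ (ZMod 3) × (ZMod 3), the third iterated ternary power of g, namely μ(μ(μ(g,g,g),g,g),g,g) (a product of seven copies of g), equals g. -/
/-- The ternary operation encoding triple multiplication of antidiagonal
matrices over the cyclic group `C₃`. -/
def mu (x y z : (ZMod 3) × (ZMod 3)) : (ZMod 3) × (ZMod 3) :=
  (x.1 + y.2 + z.1, x.2 + y.1 + z.2)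

theorem mu_idempotent_power_three :
    ∀ g : (ZMod 3) × (ZMod 3), mu (mu (mu g g g) g g) g g = g := by
  rintro ⟨m, n⟩
  simp only [mu, Prod.mk.injEq]
  constructor <;> ring_nf <;>
    · rw [show (4:ZMod 3) = 1 by decide, show (3:ZMod 3) = 0 by decide]; ring
end

section
/- Let ζ : ℂ satisfy ζ⁴ = −1. Then the set j₄ℤ = {ζ·k : k ∈ ℤ} ⊆ ℂ is not closed under binary multiplication: for every integer k, ζ * ζ ≠ ζ·k. Hence the 5-ary multiplication on j₄ℤ is nonderived. -/
theorem j4Z_not_binary_closed (ζ : ℂ) (hζ : ζ ^ 4 = -1) (k : ℤ) :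
    ζ * ζ ≠ ζ * (k : ℂ) := by
  intro h
  have hz : ζ ≠ 0 := by
    intro h0
    rw [h0] at hζ
    norm_num at hζ
  have hk : ζ = (k : ℂ) := mul_left_cancel₀ hz h
  rw [hk] at hζ
  have : ((k ^ 4 : ℤ) : ℂ) = ((-1 : ℤ) : ℂ) := by push_cast; exact hζ
  have h4 : k ^ 4 = -1 := by exact_mod_cast this
  nlinarith [sq_nonneg (k^2), sq_nonneg k]
end

section
/- The ternary convolution T on the polyadic group ring R^[2,3][G^[3]] is totally (ternary) associative: for all f₁, f₂, f₃, f₄, f₅ : (ZMod 3) × (ZMod 3) → ℤ one has T(T(f₁,f₂,f₃),f₄,f₅) = T(f₁,T(f₂,f₃,f₄),f₅) = T(f₁,f₂,T(f₃,f₄,f₅)). -/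
/-- The ternary convolution modelling the multiplication of the polyadic
group ring `R^[2,3][G^[3]]`; the sign `-1` encodes the ternary product
`(I·a)(I·b)(I·c) = I·(-abc)` of the coefficient ring `jℤ`. -/
def T (f₁ f₂ f₃ : (ZMod 3) × (ZMod 3) → ℤ) : (ZMod 3) × (ZMod 3) → ℤ :=
  fun u => ∑ x : (ZMod 3) × (ZMod 3), ∑ y : (ZMod 3) × (ZMod 3),
    ∑ z : (ZMod 3) × (ZMod 3),
      if mu x y z = u then -(f₁ x * f₂ y * f₃ z) else 0

private abbrev G' := (ZMod 3) × (ZMod 3)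

private lemma ite_sum' {α : Type*} {P : Prop} [Decidable P] (s : Finset α) (f : α → ℤ) :
    (if P then ∑ x ∈ s, f x else 0) = ∑ x ∈ s, if P then f x else 0 := by
  split <;> simp

private lemma collapse' (P : G' → Prop) [DecidablePred P] (w : G') (r : G' → ℤ) :
    (∑ x : G', if P x then (if w = x then r x else 0) else 0)
      = if P w then r w else 0 := by
  rw [Finset.sum_eq_single w]
  · simp
  · intro x _ hx; simp [(Ne.symm hx : ¬ w = x)]
  · simp

private lemma mu_assoc1 (a b c d e : G') : mu (mu a b c) d e = mu a (mu b c d) e := by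
  simp only [mu, Prod.mk.injEq]; constructor <;> ring

private lemma mu_assoc2 (a b c d e : G') : mu a (mu b c d) e = mu a b (mu c d e) := by
  simp only [mu, Prod.mk.injEq]; constructor <;> ring

private lemma reorderA (F : G' → G' → G' → G' → G' → ℤ) :
    (∑ d : G', ∑ e : G', ∑ a : G', ∑ b : G', ∑ c : G', F a b c d e)
      = ∑ a : G', ∑ b : G', ∑ c : G', ∑ d : G', ∑ e : G', F a b c d e := by
  conv_lhs =>
    rw [Finset.sum_comm]; enter [2, e]
    rw [Finset.sum_comm]; enter [2, a]
    rw [Finset.sum_comm]; enter [2, b]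
    rw [Finset.sum_comm]
  conv_lhs =>
    rw [Finset.sum_comm]; enter [2, a]
    rw [Finset.sum_comm]; enter [2, b]
    rw [Finset.sum_comm]; enter [2, c]
    rw [Finset.sum_comm]

private lemma reorderB (F : G' → G' → G' → G' → G' → ℤ) :
    (∑ a : G', ∑ e : G', ∑ b : G', ∑ c : G', ∑ d : G', F a b c d e)
      = ∑ a : G', ∑ b : G', ∑ c : G', ∑ d : G', ∑ e : G', F a b c d e := by
  conv_lhs =>
    enter [2, a]
    rw [Finset.sum_comm]; enter [2, b]
    rw [Finset.sum_comm]; enter [2, c]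
    rw [Finset.sum_comm]

private lemma expand_left (f₁ f₂ f₃ f₄ f₅ : G' → ℤ) (u : G') :
    T (T f₁ f₂ f₃) f₄ f₅ u
      = ∑ a : G', ∑ b : G', ∑ c : G', ∑ d : G', ∑ e : G',
          if mu (mu a b c) d e = u then f₁ a * f₂ b * f₃ c * f₄ d * f₅ e else 0 := by
  rw [← reorderA]
  simp only [T]
  rw [Finset.sum_comm]
  refine Finset.sum_congr rfl fun d _ => ?_
  rw [Finset.sum_comm]
  refine Finset.sum_congr rfl fun e _ => ?_
  have h1 : ∀ x : G',
      (if mu x d e = u then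
          -((∑ a : G', ∑ b : G', ∑ c : G',
              if mu a b c = x then -(f₁ a * f₂ b * f₃ c) else 0) * f₄ d * f₅ e)
        else 0)
      = ∑ a : G', ∑ b : G', ∑ c : G',
          if mu x d e = u then
            (if mu a b c = x then f₁ a * f₂ b * f₃ c * f₄ d * f₅ e else 0)
          else 0 := by
    intro x
    simp only [Finset.sum_mul, ite_mul, zero_mul, neg_mul, neg_neg, ← Finset.sum_neg_distrib,
      apply_ite (Neg.neg : ℤ → ℤ), neg_zero]
    rw [ite_sum']
    refine Finset.sum_congr rfl fun a _ => ?_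
    rw [ite_sum']
    refine Finset.sum_congr rfl fun b _ => ?_
    rw [ite_sum']
  simp only [h1]
  rw [Finset.sum_comm]
  refine Finset.sum_congr rfl fun a _ => ?_
  rw [Finset.sum_comm]
  refine Finset.sum_congr rfl fun b _ => ?_
  rw [Finset.sum_comm]
  refine Finset.sum_congr rfl fun c _ => ?_
  exact collapse' (fun x => mu x d e = u) (mu a b c) (fun _ => _)

private lemma expand_mid (f₁ f₂ f₃ f₄ f₅ : G' → ℤ) (u : G') :
    T f₁ (T f₂ f₃ f₄) f₅ u
      = ∑ a : G', ∑ b : G', ∑ c : G', ∑ d : G', ∑ e : G',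
          if mu a (mu b c d) e = u then f₁ a * (f₂ b * f₃ c * f₄ d) * f₅ e else 0 := by
  rw [← reorderB]
  simp only [T]
  refine Finset.sum_congr rfl fun a _ => ?_
  rw [Finset.sum_comm]
  refine Finset.sum_congr rfl fun e _ => ?_
  have h1 : ∀ y : G',
      (if mu a y e = u then
          -(f₁ a * (∑ b : G', ∑ c : G', ∑ d : G',
              if mu b c d = y then -(f₂ b * f₃ c * f₄ d) else 0) * f₅ e)
        else 0)
      = ∑ b : G', ∑ c : G', ∑ d : G',
          if mu a y e = u then
            (if mu b c d = y then f₁ a * (f₂ b * f₃ c * f₄ d) * f₅ e else 0)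
          else 0 := by
    intro y
    simp only [Finset.mul_sum, Finset.sum_mul, mul_ite, ite_mul, mul_zero, zero_mul,
      mul_neg, neg_mul, neg_neg, ← Finset.sum_neg_distrib,
      apply_ite (Neg.neg : ℤ → ℤ), neg_zero]
    rw [ite_sum']
    refine Finset.sum_congr rfl fun b _ => ?_
    rw [ite_sum']
    refine Finset.sum_congr rfl fun c _ => ?_
    rw [ite_sum']
  simp only [h1]
  rw [Finset.sum_comm]
  refine Finset.sum_congr rfl fun b _ => ?_
  rw [Finset.sum_comm]
  refine Finset.sum_congr rfl fun c _ => ?_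
  rw [Finset.sum_comm]
  refine Finset.sum_congr rfl fun d _ => ?_
  exact collapse' (fun y => mu a y e = u) (mu b c d) (fun _ => _)

private lemma expand_right (f₁ f₂ f₃ f₄ f₅ : G' → ℤ) (u : G') :
    T f₁ f₂ (T f₃ f₄ f₅) u
      = ∑ a : G', ∑ b : G', ∑ c : G', ∑ d : G', ∑ e : G',
          if mu a b (mu c d e) = u then f₁ a * f₂ b * (f₃ c * f₄ d * f₅ e) else 0 := by
  simp only [T]
  refine Finset.sum_congr rfl fun a _ => ?_
  refine Finset.sum_congr rfl fun b _ => ?_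
  have h1 : ∀ z : G',
      (if mu a b z = u then
          -(f₁ a * f₂ b * (∑ c : G', ∑ d : G', ∑ e : G',
              if mu c d e = z then -(f₃ c * f₄ d * f₅ e) else 0))
        else 0)
      = ∑ c : G', ∑ d : G', ∑ e : G',
          if mu a b z = u then
            (if mu c d e = z then f₁ a * f₂ b * (f₃ c * f₄ d * f₅ e) else 0)
          else 0 := by
    intro z
    simp only [Finset.mul_sum, mul_ite, mul_zero, mul_neg, neg_neg,
      ← Finset.sum_neg_distrib, apply_ite (Neg.neg : ℤ → ℤ), neg_zero]
    rw [ite_sum']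
    refine Finset.sum_congr rfl fun c _ => ?_
    rw [ite_sum']
    refine Finset.sum_congr rfl fun d _ => ?_
    rw [ite_sum']
  simp only [h1]
  rw [Finset.sum_comm]
  refine Finset.sum_congr rfl fun c _ => ?_
  rw [Finset.sum_comm]
  refine Finset.sum_congr rfl fun d _ => ?_
  rw [Finset.sum_comm]
  refine Finset.sum_congr rfl fun e _ => ?_
  exact collapse' (fun z => mu a b z = u) (mu c d e) (fun _ => _)

theorem T_totally_associative (f₁ f₂ f₃ f₄ f₅ : (ZMod 3) × (ZMod 3) → ℤ) :
    T (T f₁ f₂ f₃) f₄ f₅ = T f₁ (T f₂ f₃ f₄) f₅ ∧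
    T f₁ (T f₂ f₃ f₄) f₅ = T f₁ f₂ (T f₃ f₄ f₅) := by
  constructor
  · funext u
    rw [expand_left, expand_mid]
    refine Finset.sum_congr rfl fun a _ => ?_
    refine Finset.sum_congr rfl fun b _ => ?_
    refine Finset.sum_congr rfl fun c _ => ?_
    refine Finset.sum_congr rfl fun d _ => ?_
    refine Finset.sum_congr rfl fun e _ => ?_
    rw [mu_assoc1]
    split
    · ring
    · rfl
  · funext u
    rw [expand_mid, expand_right]
    refine Finset.sum_congr rfl fun a _ => ?_
    refine Finset.sum_congr rfl fun b _ => ?_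
    refine Finset.sum_congr rfl fun c _ => ?_
    refine Finset.sum_congr rfl fun d _ => ?_
    refine Finset.sum_congr rfl fun e _ => ?_
    rw [mu_assoc2]
    split
    · ring
    · rfl
end
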